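/- Suppose N ≠ ∅ and C ∪ L ≠ ∅. Define x* by x*_j = (β_j / ∑_{m∈L∪C} β_m) · R for all j ∈ C, and x*_{ij} = (β_j / ∑_{m∈L∪C} β_m) · R · exp(α_i / (1 + ∑_{k∈L} β_k)) / (∑_{m∈N} exp(α_m / (1 + ∑_{k∈L} β_k))) for all i ∈ N and all j ∈ L. Then x* is a global minimizer of B over the set 𝒳 of feasible budget allocations: for every feasible budget allocation x, B(x*) ≤ B(x). -/

import Mathlib

open Real Finset

/-- The function `B(x) = ∑_{i∈N} exp(α_i) / (∏_{j∈L} x_{ij}^{β_j} · ∏_{j∈C} x_j^{β_j})`. -/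
noncomputable def Bfun {N L C : Type*} [Fintype N] [Fintype L] [Fintype C]
    (α : N → ℝ) (β : L ⊕ C → ℝ) (x : (N → L → ℝ) × (C → ℝ)) : ℝ :=
  ∑ i : N, Real.exp (α i) /
    ((∏ j : L, x.1 i j ^ β (Sum.inl j)) * ∏ j : C, x.2 j ^ β (Sum.inr j))

/-- The overall pickpocket probability `P(x) = B(x) / (1 + B(x))`. -/
noncomputable def Pfun {N L C : Type*} [Fintype N] [Fintype L] [Fintype C]
    (α : N → ℝ) (β : L ⊕ C → ℝ) (x : (N → L → ℝ) × (C → ℝ)) : ℝ :=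
  Bfun α β x / (1 + Bfun α β x)

/-- A budget allocation has all entries strictly positive. -/
def PosAlloc {N L C : Type*} (x : (N → L → ℝ) × (C → ℝ)) : Prop :=
  (∀ i j, 0 < x.1 i j) ∧ ∀ j, 0 < x.2 j

/-- A budget allocation is feasible: positive entries, total spend at most `R`. -/
def FeasAlloc {N L C : Type*} [Fintype N] [Fintype L] [Fintype C]
    (R : ℝ) (x : (N → L → ℝ) × (C → ℝ)) : Prop :=
  PosAlloc x ∧ (∑ i : N, ∑ j : L, x.1 i j) + ∑ j : C, x.2 j ≤ R

/-- The candidate optimal budget allocation `x*`. -/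
noncomputable def xstar {N L C : Type*} [Fintype N] [Fintype L] [Fintype C]
    (R : ℝ) (α : N → ℝ) (β : L ⊕ C → ℝ) : (N → L → ℝ) × (C → ℝ) :=
  (fun i j => β (Sum.inl j) / (∑ m : L ⊕ C, β m) * R *
      (Real.exp (α i / (1 + ∑ k : L, β (Sum.inl k))) /
        ∑ m : N, Real.exp (α m / (1 + ∑ k : L, β (Sum.inl k)))),
   fun j => β (Sum.inr j) / (∑ m : L ⊕ C, β m) * R)


/-! `B` is convex, so it lies above its tangent plane at `x*`. There the gradient of `B` is
`-κ S / R` in every coordinate, where `κ = B(x*)` and `S = ∑ β`; hence, if `x` spends `s ≤ R`,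
`B x ≥ κ + (κ S / R) (R - s) ≥ κ`. The tangent plane bound for a single
term `a / ∏ z_j ^ b_j` reduces to `log u ≤ u - 1` and `1 + t ≤ exp t`. -/

lemma one_add_sum_mul_one_sub_le_prod_rpow_neg {ι : Type*} (s : Finset ι) {u b : ι → ℝ}
    (hu : ∀ j ∈ s, 0 < u j) (hb : ∀ j ∈ s, 0 ≤ b j) :
    1 + ∑ j ∈ s, b j * (1 - u j) ≤ ∏ j ∈ s, u j ^ (-b j) := by
  have hexp : ∏ j ∈ s, u j ^ (-b j) = exp (∑ j ∈ s, -b j * log (u j)) := by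
    rw [exp_sum]
    exact prod_congr rfl fun j hj => by rw [rpow_def_of_pos (hu j hj), mul_comm]
  have hlog : ∑ j ∈ s, b j * (1 - u j) ≤ ∑ j ∈ s, -b j * log (u j) :=
    sum_le_sum fun j hj => by nlinarith [log_le_sub_one_of_pos (hu j hj), hb j hj]
  rw [hexp]
  linarith [add_one_le_exp (∑ j ∈ s, -b j * log (u j))]

lemma div_prod_rpow_mul_one_add_sum_le {ι : Type*} [Fintype ι] {a : ℝ} {z s b : ι → ℝ}
    (ha : 0 ≤ a) (hz : ∀ j, 0 < z j) (hs : ∀ j, 0 < s j) (hb : ∀ j, 0 ≤ b j) :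
    a / (∏ j, s j ^ b j) * (1 + ∑ j, b j - ∑ j, b j * (z j / s j)) ≤ a / ∏ j, z j ^ b j := by
  have hratio : ∏ j, (z j / s j) ^ (-b j) = (∏ j, s j ^ b j) / ∏ j, z j ^ b j := by
    rw [← prod_div_distrib]
    refine prod_congr rfl fun j _ => ?_
    rw [rpow_neg (div_pos (hz j) (hs j)).le, ← inv_rpow (div_pos (hz j) (hs j)).le, inv_div,
      div_rpow (hs j).le (hz j).le]
  have htangent := one_add_sum_mul_one_sub_le_prod_rpow_neg univ
    (fun j _ => div_pos (hz j) (hs j)) (fun j _ => hb j)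
  have hprod : 0 < ∏ j, s j ^ b j := prod_pos fun j _ => rpow_pos_of_pos (hs j) _
  calc a / (∏ j, s j ^ b j) * (1 + ∑ j, b j - ∑ j, b j * (z j / s j))
      = a / (∏ j, s j ^ b j) * (1 + ∑ j, b j * (1 - z j / s j)) := by
        simp only [mul_sub, mul_one, sum_sub_distrib, add_sub_assoc]
    _ ≤ a / (∏ j, s j ^ b j) * ((∏ j, s j ^ b j) / ∏ j, z j ^ b j) := by
        rw [← hratio]; gcongr
    _ = a / ∏ j, z j ^ b j := by field_simp

section Allocation

variable {N L C : Type*}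

def locAlloc (x : (N → L → ℝ) × (C → ℝ)) (i : N) : L ⊕ C → ℝ :=
  Sum.elim (x.1 i) x.2

lemma PosAlloc.locAlloc_pos {x : (N → L → ℝ) × (C → ℝ)} (hx : PosAlloc x) (i : N) :
    ∀ m, 0 < locAlloc x i m
  | .inl j => hx.1 i j
  | .inr j => hx.2 j

variable [Fintype N] [Fintype L]

noncomputable def xstarWeight (α : N → ℝ) (β : L ⊕ C → ℝ) (i : N) : ℝ :=
  exp (α i / (1 + ∑ k, β (.inl k))) / ∑ m, exp (α m / (1 + ∑ k, β (.inl k)))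

lemma xstarWeight_pos (α : N → ℝ) (β : L ⊕ C → ℝ) (i : N) : 0 < xstarWeight α β i :=
  div_pos (exp_pos _) (sum_pos (fun _ _ => exp_pos _) ⟨i, mem_univ i⟩)

lemma sum_xstarWeight [Nonempty N] (α : N → ℝ) (β : L ⊕ C → ℝ) : ∑ i, xstarWeight α β i = 1 := by
  simp only [xstarWeight, ← sum_div]
  exact div_self (sum_pos (fun _ _ => exp_pos _) univ_nonempty).ne'

variable [Fintype C]

lemma Bfun_eq_sum_div_prod (α : N → ℝ) (β : L ⊕ C → ℝ) (x : (N → L → ℝ) × (C → ℝ)) :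
    Bfun α β x = ∑ i, exp (α i) / ∏ m, locAlloc x i m ^ β m := by
  simp only [Bfun, locAlloc, Fintype.prod_sum_type, Sum.elim_inl, Sum.elim_inr]

noncomputable def xstarValue (R : ℝ) (α : N → ℝ) (β : L ⊕ C → ℝ) : ℝ :=
  (∑ m, exp (α m / (1 + ∑ k, β (.inl k)))) ^ (1 + ∑ k, β (.inl k)) /
    ∏ m, (β m / (∑ m, β m) * R) ^ β m

lemma locAlloc_xstar_inl (R : ℝ) (α : N → ℝ) (β : L ⊕ C → ℝ) (i : N) (j : L) :
    locAlloc (xstar R α β) i (.inl j) = β (.inl j) / (∑ m, β m) * R * xstarWeight α β i :=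
  rfl

lemma locAlloc_xstar_inr (R : ℝ) (α : N → ℝ) (β : L ⊕ C → ℝ) (i : N) (j : C) :
    locAlloc (xstar R α β) i (.inr j) = β (.inr j) / (∑ m, β m) * R :=
  rfl

variable {R : ℝ} {β : L ⊕ C → ℝ}

lemma budget_share_pos [Nonempty (L ⊕ C)] (hR : 0 < R) (hβ : ∀ j, 0 < β j) (m : L ⊕ C) :
    0 < β m / (∑ m, β m) * R :=
  mul_pos (div_pos (hβ m) (sum_pos (fun m _ => hβ m) univ_nonempty)) hR

lemma locAlloc_xstar_pos [Nonempty (L ⊕ C)] (hR : 0 < R) (α : N → ℝ) (hβ : ∀ j, 0 < β j)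
    (i : N) : ∀ m, 0 < locAlloc (xstar R α β) i m
  | .inl _ => mul_pos (budget_share_pos hR hβ _) (xstarWeight_pos α β i)
  | .inr _ => budget_share_pos hR hβ _

lemma prod_locAlloc_xstar_rpow [Nonempty (L ⊕ C)] (hR : 0 < R) (α : N → ℝ)
    (hβ : ∀ j, 0 < β j) (i : N) :
    ∏ m, locAlloc (xstar R α β) i m ^ β m =
      (∏ m, (β m / (∑ m, β m) * R) ^ β m) * xstarWeight α β i ^ ∑ k, β (.inl k) := by
  simp only [Fintype.prod_sum_type, locAlloc_xstar_inl, locAlloc_xstar_inr,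
    mul_rpow (budget_share_pos hR hβ _).le (xstarWeight_pos α β i).le, prod_mul_distrib,
    ← rpow_sum_of_pos (xstarWeight_pos α β i)]
  ring

lemma exp_div_prod_locAlloc_xstar_rpow [Nonempty (L ⊕ C)] (hR : 0 < R) (α : N → ℝ)
    (hβ : ∀ j, 0 < β j) (i : N) :
    exp (α i) / ∏ m, locAlloc (xstar R α β) i m ^ β m =
      xstarWeight α β i * xstarValue R α β := by
  set E := 1 + ∑ k, β (.inl k)
  set W := ∑ m, exp (α m / E)
  have hW : 0 < W := sum_pos (fun _ _ => exp_pos _) ⟨i, mem_univ i⟩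
  have hw := xstarWeight_pos α β i
  have hE : 0 < E := by
    have := sum_nonneg fun k (_ : k ∈ univ) => (hβ (.inl k)).le
    linarith
  have hexp : exp (α i) = xstarWeight α β i ^ E * W ^ E := by
    rw [← mul_rpow hw.le hW.le, xstarWeight, div_mul_cancel₀ _ hW.ne', ← exp_mul,
      div_mul_cancel₀ _ hE.ne']
  have hK : 0 < ∏ m, (β m / (∑ m, β m) * R) ^ β m :=
    prod_pos fun m _ => rpow_pos_of_pos (budget_share_pos hR hβ m) _
  rw [prod_locAlloc_xstar_rpow hR α hβ, hexp, xstarValue, rpow_add hw, rpow_one]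
  generalize ∏ m, (β m / (∑ m, β m) * R) ^ β m = K at hK ⊢
  field_simp
  rfl

lemma xstarValue_pos [Nonempty N] [Nonempty (L ⊕ C)] (hR : 0 < R) (α : N → ℝ)
    (hβ : ∀ j, 0 < β j) : 0 < xstarValue R α β :=
  div_pos (rpow_pos_of_pos (sum_pos (fun _ _ => exp_pos _) univ_nonempty) _)
    (prod_pos fun m _ => rpow_pos_of_pos (budget_share_pos hR hβ m) _)

lemma Bfun_xstar [Nonempty N] [Nonempty (L ⊕ C)] (hR : 0 < R) (α : N → ℝ) (hβ : ∀ j, 0 < β j) :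
    Bfun α β (xstar R α β) = xstarValue R α β := by
  rw [Bfun_eq_sum_div_prod, sum_congr rfl fun i _ => exp_div_prod_locAlloc_xstar_rpow hR α hβ i,
    ← sum_mul, sum_xstarWeight, one_mul]

lemma xstarWeight_mul_sum_mul_div_locAlloc_xstar [Nonempty (L ⊕ C)] (hR : 0 < R) (α : N → ℝ)
    (hβ : ∀ j, 0 < β j) (x : (N → L → ℝ) × (C → ℝ)) (i : N) :
    xstarWeight α β i * ∑ m, β m * (locAlloc x i m / locAlloc (xstar R α β) i m) =
      (∑ m, β m) / R * ((∑ j, x.1 i j) + xstarWeight α β i * ∑ j, x.2 j) := by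
  have hS : 0 < ∑ m, β m := sum_pos (fun m _ => hβ m) univ_nonempty
  have hw := xstarWeight_pos α β i
  have hL : ∀ j, β (.inl j) * (locAlloc x i (.inl j) / locAlloc (xstar R α β) i (.inl j)) =
      (∑ m, β m) / R / xstarWeight α β i * x.1 i j := fun j => by
    rw [locAlloc_xstar_inl]
    field_simp [(hβ (.inl j)).ne']
    rfl
  have hC : ∀ j, β (.inr j) * (locAlloc x i (.inr j) / locAlloc (xstar R α β) i (.inr j)) =
      (∑ m, β m) / R * x.2 j := fun j => by
    rw [locAlloc_xstar_inr]
    field_simp [(hβ (.inr j)).ne']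
    rfl
  rw [Fintype.sum_sum_type, sum_congr rfl fun j _ => hL j, sum_congr rfl fun j _ => hC j,
    ← mul_sum, ← mul_sum]
  field_simp

lemma sum_exp_div_prod_locAlloc_xstar_rpow_mul [Nonempty N] [Nonempty (L ⊕ C)] (hR : 0 < R)
    (α : N → ℝ) (hβ : ∀ j, 0 < β j) (x : (N → L → ℝ) × (C → ℝ)) :
    ∑ i, exp (α i) / (∏ m, locAlloc (xstar R α β) i m ^ β m) *
        ∑ m, β m * (locAlloc x i m / locAlloc (xstar R α β) i m) =
      xstarValue R α β * (∑ m, β m) / R * ((∑ i, ∑ j, x.1 i j) + ∑ j, x.2 j) := by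
  calc _ = ∑ i, xstarValue R α β *
          (xstarWeight α β i * ∑ m, β m * (locAlloc x i m / locAlloc (xstar R α β) i m)) :=
        sum_congr rfl fun i _ => by rw [exp_div_prod_locAlloc_xstar_rpow hR α hβ]; ring
    _ = xstarValue R α β * ((∑ m, β m) / R *
          ∑ i, ((∑ j, x.1 i j) + xstarWeight α β i * ∑ j, x.2 j)) := by
        simp only [xstarWeight_mul_sum_mul_div_locAlloc_xstar hR α hβ x, ← mul_sum]
    _ = _ := by rw [sum_add_distrib, ← sum_mul, sum_xstarWeight, one_mul]; ring

end Allocation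

theorem stmt_15_general {N L C : Type*} [Fintype N] [Fintype L] [Fintype C]
    [Nonempty N] [Nonempty (L ⊕ C)]
    (R : ℝ) (hR : 0 < R) (α : N → ℝ)
    (β : L ⊕ C → ℝ) (hβ : ∀ j, 0 < β j) :
    ∀ x : (N → L → ℝ) × (C → ℝ), FeasAlloc R x →
      Bfun α β (xstar R α β) ≤ Bfun α β x := by
  intro x hx
  set κ := xstarValue R α β
  set S := ∑ m, β m
  set T : N → ℝ := fun i => exp (α i) / ∏ m, locAlloc (xstar R α β) i m ^ β m
  have hS : 0 < S := sum_pos (fun m _ => hβ m) univ_nonempty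
  have hT : ∑ i, T i = κ := by rw [← Bfun_eq_sum_div_prod, Bfun_xstar hR α hβ]
  have htangent : ∀ i, T i * (1 + S - ∑ m, β m * (locAlloc x i m / locAlloc (xstar R α β) i m))
      ≤ exp (α i) / ∏ m, locAlloc x i m ^ β m := fun i =>
    div_prod_rpow_mul_one_add_sum_le (exp_pos _).le (hx.1.locAlloc_pos i)
      (locAlloc_xstar_pos hR α hβ i) fun m => (hβ m).le
  have hκ : 0 < κ := xstarValue_pos hR α hβ
  calc Bfun α β (xstar R α β) = κ * (1 + S) - κ * S / R * R := by
        rw [Bfun_xstar hR α hβ]; field_simp; ring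
    _ ≤ κ * (1 + S) - κ * S / R * ((∑ i, ∑ j, x.1 i j) + ∑ j, x.2 j) := by
        gcongr; exact hx.2
    _ = ∑ i, T i * (1 + S - ∑ m, β m * (locAlloc x i m / locAlloc (xstar R α β) i m)) := by
        simp only [mul_sub, sum_sub_distrib, ← sum_mul, hT]
        rw [sum_exp_div_prod_locAlloc_xstar_rpow_mul hR α hβ]
    _ ≤ ∑ i, exp (α i) / ∏ m, locAlloc x i m ^ β m := sum_le_sum fun i _ => htangent i
    _ = Bfun α β x := (Bfun_eq_sum_div_prod α β x).symm

theorem stmt_15 {N L C : Type*} [Fintype N] [Fintype L] [Fintype C]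
    [Nonempty N] [Nonempty (L ⊕ C)]
    (R : ℝ) (hR : 0 < R) (α : N → ℝ) (hα : ∀ i, 0 ≤ α i)
    (β : L ⊕ C → ℝ) (hβ : ∀ j, 0 < β j) :
    ∀ x : (N → L → ℝ) × (C → ℝ), FeasAlloc R x →
      Bfun α β (xstar R α β) ≤ Bfun α β x :=
  stmt_15_general R hR α β hβ
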